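/- arXiv:2110.06401 — 2 statements merged into one kernel-verified Lean document; each statement's English description precedes it below -/
import Mathlib

section
/- (Proposition 1, statistics form.) Let V = {1,…,n} with a uniformly B-connected sequence of undirected edge sets (E_t), let P be a finite set of pseudo-points, and let T < ∞. For each robot j ∈ V, each time 1 ≤ τ ≤ T, and each p ∈ P, let m̃_τ^j(p) ≥ 0 and ζ̃_τ^j(p) ∈ ℝ be the mass and average observation of the mini-batch produced by robot j at time τ, and let A_t^{τ,j} ⊆ V be its flooding informed set. Define robot i's distributed statistics by m_t^i(p) = (1/n) Σ_{τ=1}^{min(t,T)} Σ_{j : i ∈ A_t^{τ,j}} m̃_τ^j(p) and m_t^i(p) ζ_t^i(p) = (1/n) Σ_{τ=1}^{min(t,T)} Σ_{j : i ∈ A_t^{τ,j}} m̃_τ^j(p) ζ̃_τ^j(p), and the centralized statistics by m_t^{ctr}(p) = (1/n) Σ_{τ=1}^{min(t,T)} Σ_{j=1}^{n} m̃_τ^j(p) and m_t^{ctr}(p) ζ_t^{ctr}(p) = (1/n) Σ_{τ=1}^{min(t,T)} Σ_{j=1}^{n} m̃_τ^j(p) ζ̃_τ^j(p). Then at time t*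 = (⌈T/B⌉ + (n − 1))B, every robot i ∈ V satisfies m_{t*}^i(p) = m_{t*}^{ctr}(p) for all p ∈ P, and ζ_{t*}^i(p) = ζ_{t*}^{ctr}(p) for all p with m_{t*}^{ctr}(p) > 0; consequently the sparse Gaussian-process mean and covariance functions, being determined by these statistics, coincide with those of the centralized estimator. -/
/-!
Every mini-batch is produced by time `⌈T/B⌉ B`, so from then on its informed set is nonempty.
While an informed set is not all of `V`, the connected union graph of the next window has an edge
leaving it, and flooding crosses that edge within the window; so the set gains a robot in every
window and is all of `V` after `n - 1` further windows. At `t*` each robot therefore sums over all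
mini-batches, exactly as the centralized estimator does, and the averages `ζ` agree after
cancelling the common positive mass.
-/

/-- The union graph of the time-varying graph `E` over the window
`[k*B, (k+1)*B)`. -/
def windowGraph {n : ℕ} (E : ℕ → SimpleGraph (Fin n)) (B k : ℕ) :
    SimpleGraph (Fin n) :=
  ⨆ t ∈ Finset.Ico (k * B) ((k + 1) * B), E t

open Finset

section Flooding

variable {V : Type*}

def IsFlooding (E : ℕ → SimpleGraph V) (τ : ℕ) (A : ℕ → Finset V) : Prop :=
  ∀ t, τ ≤ t → ∀ i, i ∈ A (t + 1) ↔ i ∈ A t ∨ ∃ r ∈ A t, (E t).Adj i r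

namespace IsFlooding

variable {E : ℕ → SimpleGraph V} {τ : ℕ} {A : ℕ → Finset V}

theorem mono (hA : IsFlooding E τ A) {s t : ℕ} (hs : τ ≤ s) (hst : s ≤ t) : A s ⊆ A t := by
  induction t, hst using Nat.le_induction with
  | base => exact subset_rfl
  | succ t hst ih =>
    exact ih.trans fun i hi => (hA t (hs.trans hst) i).2 (Or.inl hi)

theorem mem_succ_of_adj (hA : IsFlooding E τ A) {t : ℕ} (ht : τ ≤ t) {i r : V} (hr : r ∈ A t)
    (hadj : (E t).Adj i r) : i ∈ A (t + 1) :=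
  (hA t ht i).2 (Or.inr ⟨r, hr, hadj⟩)

variable [Fintype V]

theorem card_lt_of_connected (hA : IsFlooding E τ A) {a b : ℕ} (hτ : τ ≤ a)
    (hconn : (⨆ t ∈ Ico a b, E t).Connected) (hne : (A a).Nonempty) (hu : A a ≠ univ) :
    #(A a) < #(A b) := by
  obtain ⟨x, hx⟩ := hne
  obtain ⟨y, hy⟩ : ∃ y, y ∉ A a := by simpa [eq_univ_iff_forall] using hu
  obtain ⟨d, -, hd_in, hd_out⟩ := (hconn x y).some.exists_boundary_dart (↑(A a)) hx hy
  obtain ⟨t, ht, hadj⟩ : ∃ t ∈ Ico a b, (E t).Adj d.fst d.snd := by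
    simpa [SimpleGraph.iSup_adj] using d.adj
  rw [mem_Ico] at ht
  have hsub : A a ⊆ A b := hA.mono hτ (ht.1.trans ht.2.le)
  have hnew : d.snd ∈ A b :=
    hA.mono (hτ.trans (ht.1.trans t.le_succ)) ht.2
      (hA.mem_succ_of_adj (hτ.trans ht.1) (hA.mono hτ ht.1 hd_in) hadj.symm)
  exact card_lt_card ((ssubset_iff_of_subset hsub).2 ⟨d.snd, hnew, hd_out⟩)

variable {B : ℕ} (hconn : ∀ k, (⨆ t ∈ Ico (k * B) ((k + 1) * B), E t).Connected)
include hconn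

theorem min_card_le (hA : IsFlooding E τ A) {k : ℕ} (hτ : τ ≤ k * B)
    (hne : (A (k * B)).Nonempty) (m : ℕ) :
    min (Fintype.card V) (m + 1) ≤ #(A ((k + m) * B)) := by
  induction m with
  | zero => simpa using Or.inr hne.card_pos
  | succ m ih =>
    have hτm : τ ≤ (k + m) * B := hτ.trans (Nat.mul_le_mul_right B (k.le_add_right m))
    have hsub : A (k * B) ⊆ A ((k + m) * B) :=
      hA.mono hτ (Nat.mul_le_mul_right B (k.le_add_right m))
    rw [← add_assoc]
    by_cases hu : A ((k + m) * B) = univ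
    · have hfull : A ((k + m + 1) * B) = univ :=
        eq_univ_of_forall fun x =>
          hA.mono hτm (Nat.mul_le_mul_right B (k + m).le_succ) (hu ▸ mem_univ x)
      simp [hfull]
    · have := hA.card_lt_of_connected hτm (hconn (k + m)) (hne.mono hsub) hu
      omega

theorem eq_univ (hA : IsFlooding E τ A) {k : ℕ} (hτ : τ ≤ k * B)
    (hne : (A (k * B)).Nonempty) :
    A ((k + (Fintype.card V - 1)) * B) = univ := by
  have hV : 0 < Fintype.card V := Fintype.card_pos_iff.2 ⟨hne.choose⟩
  have h := hA.min_card_le hconn hτ hne (Fintype.card V - 1)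
  rw [Nat.sub_add_cancel hV, min_self] at h
  exact eq_univ_of_card _ (le_antisymm (card_le_univ _) h)

end IsFlooding

end Flooding

theorem distributed_stats_eq_centralized_general
    (n B T : ℕ) (hB : 0 < B)
    (E : ℕ → SimpleGraph (Fin n)) [∀ t, DecidableRel (E t).Adj]
    (hconn : ∀ k : ℕ, (windowGraph E B k).Connected)
    (P : Type*)
    (mTil zTil : Fin n → ℕ → P → ℝ)
    (A : ℕ → Fin n → ℕ → Finset (Fin n))
    (hA0 : ∀ (τ : ℕ) (j : Fin n), A τ j τ = {j})
    (hAstep : ∀ (τ : ℕ) (j : Fin n) (t : ℕ), τ ≤ t →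
      A τ j (t + 1) = A τ j t ∪
        Finset.univ.filter (fun i => ∃ r ∈ A τ j t, (E t).Adj i r))
    (mDist zDist : Fin n → ℕ → P → ℝ)
    (hmDist : ∀ (i : Fin n) (t : ℕ) (p : P),
      mDist i t p = (1 / n) * ∑ τ ∈ Finset.Icc 1 (min t T),
        ∑ j ∈ Finset.univ.filter (fun j => i ∈ A τ j t), mTil j τ p)
    (hzDist : ∀ (i : Fin n) (t : ℕ) (p : P),
      mDist i t p * zDist i t p = (1 / n) * ∑ τ ∈ Finset.Icc 1 (min t T),
        ∑ j ∈ Finset.univ.filter (fun j => i ∈ A τ j t),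
          mTil j τ p * zTil j τ p)
    (mCtr zCtr : ℕ → P → ℝ)
    (hmCtr : ∀ (t : ℕ) (p : P),
      mCtr t p = (1 / n) * ∑ τ ∈ Finset.Icc 1 (min t T),
        ∑ j : Fin n, mTil j τ p)
    (hzCtr : ∀ (t : ℕ) (p : P),
      mCtr t p * zCtr t p = (1 / n) * ∑ τ ∈ Finset.Icc 1 (min t T),
        ∑ j : Fin n, mTil j τ p * zTil j τ p) :
    ∀ i : Fin n, ∀ p : P,
      mDist i ((T ⌈/⌉ B + (n - 1)) * B) p = mCtr ((T ⌈/⌉ B + (n - 1)) * B) p ∧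
      (0 < mCtr ((T ⌈/⌉ B + (n - 1)) * B) p →
        zDist i ((T ⌈/⌉ B + (n - 1)) * B) p =
          zCtr ((T ⌈/⌉ B + (n - 1)) * B) p) := by
  intro i p
  set tStar := (T ⌈/⌉ B + (n - 1)) * B
  have hT : T ≤ T ⌈/⌉ B * B := by simpa [mul_comm] using le_smul_ceilDiv (b := T) hB
  have hinformed : ∀ τ ∈ Icc 1 (min tStar T), univ.filter (fun j => i ∈ A τ j tStar) = univ := by
    intro τ hτ
    refine filter_true_of_mem fun j _ => ?_
    have hflood : IsFlooding E τ (A τ j) := fun t ht x => by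
      simp [hAstep τ j t ht]
    have hτB : τ ≤ T ⌈/⌉ B * B := ((mem_Icc.1 hτ).2.trans (min_le_right _ _)).trans hT
    have hne : (A τ j (T ⌈/⌉ B * B)).Nonempty :=
      ⟨j, hflood.mono le_rfl hτB (hA0 τ j ▸ mem_singleton_self j)⟩
    have hfull := hflood.eq_univ hconn hτB hne
    rw [Fintype.card_fin] at hfull
    simp [tStar, hfull]
  have hm : mDist i tStar p = mCtr tStar p := by
    rw [hmDist, hmCtr]
    exact congrArg _ (sum_congr rfl fun τ hτ => by rw [hinformed τ hτ])
  refine ⟨hm, fun hpos => mul_left_cancel₀ hpos.ne' ?_⟩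
  rw [hzCtr, ← hm, hzDist]
  exact congrArg _ (sum_congr rfl fun τ hτ => by rw [hinformed τ hτ])

/-- **Proposition 1, statistics form.** Over a uniformly
`B`-connected time-varying network of `n` robots, mini-batches of pseudo-point
statistics `(m̃_τ^j, ζ̃_τ^j)` are produced for `1 ≤ τ ≤ T` and spread by
flooding with informed sets `A^{τ,j}`.  Each robot `i` aggregates the
mini-batches it has received; the centralized estimator aggregates all of
them.  Then at time `t* = (⌈T/B⌉ + (n-1))·B` every robot's mass `m_{t*}^i(p)`
equals the centralized mass `m_{t*}^{ctr}(p)` for every pseudo-point `p`, and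
its average `ζ_{t*}^i(p)` equals the centralized `ζ_{t*}^{ctr}(p)` whenever
`m_{t*}^{ctr}(p) > 0`; hence the sparse GP posteriors coincide. -/
theorem distributed_stats_eq_centralized
    (n B T : ℕ) (hn : 1 ≤ n) (hB : 0 < B)
    (E : ℕ → SimpleGraph (Fin n)) [∀ t, DecidableRel (E t).Adj]
    (hconn : ∀ k : ℕ, (windowGraph E B k).Connected)
    (P : Type*) [Fintype P]
    (mTil zTil : Fin n → ℕ → P → ℝ)
    (hmTil : ∀ (j : Fin n) (τ : ℕ), 1 ≤ τ → τ ≤ T → ∀ p, 0 ≤ mTil j τ p)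
    (A : ℕ → Fin n → ℕ → Finset (Fin n))
    (hA0 : ∀ (τ : ℕ) (j : Fin n), A τ j τ = {j})
    (hAstep : ∀ (τ : ℕ) (j : Fin n) (t : ℕ), τ ≤ t →
      A τ j (t + 1) = A τ j t ∪
        Finset.univ.filter (fun i => ∃ r ∈ A τ j t, (E t).Adj i r))
    (mDist zDist : Fin n → ℕ → P → ℝ)
    (hmDist : ∀ (i : Fin n) (t : ℕ) (p : P),
      mDist i t p = (1 / n) * ∑ τ ∈ Finset.Icc 1 (min t T),
        ∑ j ∈ Finset.univ.filter (fun j => i ∈ A τ j t), mTil j τ p)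
    (hzDist : ∀ (i : Fin n) (t : ℕ) (p : P),
      mDist i t p * zDist i t p = (1 / n) * ∑ τ ∈ Finset.Icc 1 (min t T),
        ∑ j ∈ Finset.univ.filter (fun j => i ∈ A τ j t),
          mTil j τ p * zTil j τ p)
    (mCtr zCtr : ℕ → P → ℝ)
    (hmCtr : ∀ (t : ℕ) (p : P),
      mCtr t p = (1 / n) * ∑ τ ∈ Finset.Icc 1 (min t T),
        ∑ j : Fin n, mTil j τ p)
    (hzCtr : ∀ (t : ℕ) (p : P),
      mCtr t p * zCtr t p = (1 / n) * ∑ τ ∈ Finset.Icc 1 (min t T),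
        ∑ j : Fin n, mTil j τ p * zTil j τ p) :
    ∀ i : Fin n, ∀ p : P,
      mDist i ((T ⌈/⌉ B + (n - 1)) * B) p = mCtr ((T ⌈/⌉ B + (n - 1)) * B) p ∧
      (0 < mCtr ((T ⌈/⌉ B + (n - 1)) * B) p →
        zDist i ((T ⌈/⌉ B + (n - 1)) * B) p =
          zCtr ((T ⌈/⌉ B + (n - 1)) * B) p) :=
  distributed_stats_eq_centralized_general n B T hB E hconn P mTil zTil A hA0 hAstep mDist zDist
    hmDist hzDist mCtr zCtr hmCtr hzCtr
end

section
/- Let V = {1,…,n} and let (E_t)_{t∈ℕ} be a uniformly B-connected sequence of undirected edge sets on V, and let W_t be the Metropolis weight matrix of the graph (V, E_t) for each t. Then for every starting time τ, the backward matrix products converge to the uniform averaging matrix: W_T W_{T−1} ⋯ W_τ → (1/n) 𝟙 𝟙ᵀ as T → ∞, where 𝟙 ∈ ℝⁿ is the all-ones vector; i.e., the product has the uniform stationary distribution regardless of τ. -/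
open Matrix

/-- The Metropolis weight matrix of an undirected graph `G` on `{1,…,n}`:
`W i j = 1/(1 + max(deg i, deg j))` for edges `(i,j) ∈ E`, `W i j = 0` for
non-adjacent `i ≠ j`, and `W i i = 1 - ∑_{j : (i,j) ∈ E} W i j`. -/
noncomputable def metropolis {n : ℕ} (G : SimpleGraph (Fin n))
    [DecidableRel G.Adj] : Matrix (Fin n) (Fin n) ℝ :=
  Matrix.of fun i j =>
    if i = j then
      1 - ∑ k ∈ G.neighborFinset i,
        (1 : ℝ) / (1 + max (G.degree i) (G.degree k) : ℝ)
    else if G.Adj i j then (1 : ℝ) / (1 + max (G.degree i) (G.degree j) : ℝ)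
    else 0

/-!
A Metropolis matrix is symmetric with unit row sums, hence doubly stochastic, and its diagonal
entries and its entries on edges are at least `1 / n`. Over a window of `B` steps the product
therefore dominates `(1 / n) ^ B` on the diagonal and on the edges of the connected union graph,
and over `n` consecutive windows the set of rows with a large entry in a fixed column grows by a vertex per
window, so every product over `n * B` steps has all entries at least `δ = (1 / n) ^ (n * B)`.
A stochastic matrix with entries `≥ δ` contracts the oscillation `max x - min x` by the factor
`1 - n * δ` (Doeblin), so the columns of the backward products become constant, and since column
sums stay equal to `1` that constant is `1 / n`.
-/

open Finset Filter Topology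

section BackProd

variable {M : Type*} [Monoid M] (F : ℕ → M) {a b c : ℕ}

/-- `backProd F a b = F (b - 1) * ⋯ * F (a + 1) * F a`, and `1` when `b ≤ a`. -/
def backProd (a b : ℕ) : M :=
  ((List.range (b - a)).map fun s => F (b - 1 - s)).prod

@[simp]
lemma backProd_self (a : ℕ) : backProd F a a = 1 := by
  simp [backProd]

lemma backProd_succ (h : a ≤ b) : backProd F a (b + 1) = F b * backProd F a b := by
  rw [backProd, Nat.sub_add_comm h, List.range_succ_eq_map]
  simp only [List.map_cons, List.prod_cons, List.map_map, backProd]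
  congr 3
  funext s
  simp only [Function.comp_apply]
  congr 1
  omega

lemma backProd_mul_backProd (hab : a ≤ b) (hbc : b ≤ c) :
    backProd F b c * backProd F a b = backProd F a c := by
  induction c, hbc using Nat.le_induction with
  | base => rw [backProd_self, one_mul]
  | succ c hbc ih => rw [backProd_succ F hbc, backProd_succ F (hab.trans hbc), mul_assoc, ih]

lemma backProd_mem {S : Submonoid M} (hF : ∀ t, F t ∈ S) : backProd F a b ∈ S :=
  S.list_prod_mem (by simp [hF])

lemma backProd_windows (B : ℕ) (h : a ≤ b) :
    backProd (fun k => backProd F (k * B) ((k + 1) * B)) a b = backProd F (a * B) (b * B) := by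
  induction b, h using Nat.le_induction with
  | base => simp
  | succ b hab ih =>
    rw [backProd_succ _ hab, ih, backProd_mul_backProd F (Nat.mul_le_mul_right B hab)
      (Nat.mul_le_mul_right B b.le_succ)]

end BackProd

section EntryBounds

variable {ι : Type*} [Fintype ι]

lemma le_mul_apply_of_le {A C : Matrix ι ι ℝ} (hA : ∀ i j, 0 ≤ A i j) (hC : ∀ i j, 0 ≤ C i j)
    {x y : ℝ} {i k j : ι} (hy₀ : 0 ≤ y) (hx : x ≤ A i k) (hy : y ≤ C k j) :
    x * y ≤ (A * C) i j :=
  (mul_le_mul hx hy hy₀ (hA i k)).trans <| by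
    rw [Matrix.mul_apply]
    exact single_le_sum (f := fun l => A i l * C l j) (fun l _ => mul_nonneg (hA i l) (hC l j))
      (mem_univ k)

variable [DecidableEq ι] {F : ℕ → Matrix ι ι ℝ} {a b : ℕ} {c : ℝ}

lemma backProd_nonneg (hF : ∀ t i j, 0 ≤ F t i j) (h : a ≤ b) (i j : ι) :
    0 ≤ backProd F a b i j := by
  induction b, h using Nat.le_induction generalizing i with
  | base => simp [Matrix.one_apply, apply_ite]
  | succ b hab ih =>
    rw [backProd_succ F hab, Matrix.mul_apply]
    exact sum_nonneg fun k _ => mul_nonneg (hF b i k) (ih k)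

lemma pow_le_backProd_diag (hc : 0 ≤ c) (hF : ∀ t i j, 0 ≤ F t i j)
    (hdiag : ∀ t i, c ≤ F t i i) (h : a ≤ b) (i : ι) : c ^ (b - a) ≤ backProd F a b i i := by
  induction b, h using Nat.le_induction with
  | base => simp
  | succ b hab ih =>
    rw [backProd_succ F hab, Nat.sub_add_comm hab, pow_succ']
    exact le_mul_apply_of_le (hF b) (backProd_nonneg hF hab) (pow_nonneg hc _) (hdiag b i) ih

lemma pow_le_backProd_apply (hc : 0 ≤ c) (hF : ∀ t i j, 0 ≤ F t i j)
    (hdiag : ∀ t i, c ≤ F t i i) {t : ℕ} {i j : ι} (hat : a ≤ t) (htb : t < b)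
    (hij : c ≤ F t i j) : c ^ (b - a) ≤ backProd F a b i j := by
  have hstep : c ^ (t + 1 - a) ≤ backProd F a (t + 1) i j := by
    rw [backProd_succ F hat, Nat.sub_add_comm hat, pow_succ']
    exact le_mul_apply_of_le (hF t) (backProd_nonneg hF hat) (pow_nonneg hc _) hij
      (pow_le_backProd_diag hc hF hdiag hat j)
  rw [← backProd_mul_backProd F (hat.trans t.le_succ) htb,
    show b - a = (b - (t + 1)) + (t + 1 - a) by omega, pow_add]
  exact le_mul_apply_of_le (backProd_nonneg hF htb) (backProd_nonneg hF (hat.trans t.le_succ))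
    (pow_nonneg hc _) (pow_le_backProd_diag hc hF hdiag htb i) hstep

end EntryBounds

lemma SimpleGraph.Connected.exists_adj_of_ne_univ {V : Type*} {G : SimpleGraph V}
    (hG : G.Connected) {S : Set V} (hS : S.Nonempty) (hS' : S ≠ Set.univ) :
    ∃ u ∉ S, ∃ v ∈ S, G.Adj u v := by
  obtain ⟨v, hv⟩ := hS
  obtain ⟨u, hu⟩ := (Set.ne_univ_iff_exists_notMem S).mp hS'
  obtain ⟨d, -, hd, hd'⟩ := (hG.preconnected v u).some.exists_boundary_dart S hv hu
  exact ⟨d.snd, hd', d.fst, hd, d.adj.symm⟩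

section Connectivity

variable {ι : Type*} [Fintype ι] [DecidableEq ι] {A : ℕ → Matrix ι ι ℝ} {G : ℕ → SimpleGraph ι}
  {c : ℝ}

lemma pow_le_backProd_apply_of_connected (hc : 0 ≤ c) (hA : ∀ k i j, 0 ≤ A k i j)
    (hdiag : ∀ k i, c ≤ A k i i) (hadj : ∀ k i j, (G k).Adj i j → c ≤ A k i j)
    (hG : ∀ k, (G k).Connected) (a : ℕ) {m : ℕ} (hm : Fintype.card ι ≤ m + 1) (i j : ι) :
    c ^ m ≤ backProd A a (a + m) i j := by
  -- an edge of `G (a + m)` leaving `reach m` adds a row to `reach (m + 1)`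
  let reach (m : ℕ) : Finset ι := {i | c ^ m ≤ backProd A a (a + m) i j}
  have hcard : 0 < Fintype.card ι := Fintype.card_pos_iff.mpr ⟨j⟩
  have hgrow : ∀ m, min (Fintype.card ι) (m + 1) ≤ #(reach m) := by
    intro m
    induction m with
    | zero =>
      refine (min_le_right _ _).trans (one_le_card.mpr ⟨j, ?_⟩)
      simp [reach]
    | succ m ih =>
      have hstep : ∀ u v, v ∈ reach m → (u = v ∨ (G (a + m)).Adj u v) → u ∈ reach (m + 1) := by
        intro u v hv huv
        simp only [reach, mem_filter, mem_univ, true_and] at hv ⊢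
        rw [← add_assoc, backProd_succ A (Nat.le_add_right a m), pow_succ']
        refine le_mul_apply_of_le (hA _) (backProd_nonneg hA (Nat.le_add_right a m))
          (pow_nonneg hc m) ?_ hv
        rcases huv with rfl | huv
        exacts [hdiag _ u, hadj _ u v huv]
      have hsub : reach m ⊆ reach (m + 1) := fun v hv => hstep v v hv (Or.inl rfl)
      by_cases hfull : reach m = univ
      · rw [hfull] at hsub
        rw [univ_subset_iff.mp hsub, card_univ]
        exact min_le_left _ _
      · obtain ⟨u, hu, v, hv, huv⟩ := (hG (a + m)).exists_adj_of_ne_univ (S := reach m)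
          (coe_nonempty.mpr (card_pos.mp (by omega))) (by simpa using hfull)
        have hins : insert u (reach m) ⊆ reach (m + 1) :=
          insert_subset (hstep u v hv (Or.inr huv)) hsub
        have := card_le_card hins
        rw [card_insert_of_notMem hu] at this
        omega
  have hall : reach m = univ := eq_univ_of_card _ <|
    le_antisymm (card_le_univ _) ((min_eq_left hm).symm.le.trans (hgrow m))
  have hi : i ∈ reach m := hall ▸ mem_univ i
  simpa [reach] using hi

end Connectivity

section Oscillation

variable {ι : Type*} [Fintype ι] [Nonempty ι]

noncomputable def osc (x : ι → ℝ) : ℝ :=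
  univ.sup' univ_nonempty x - univ.inf' univ_nonempty x

lemma abs_sub_average_le_osc (x : ι → ℝ) (i : ι) :
    |x i - (Fintype.card ι : ℝ)⁻¹ * ∑ j, x j| ≤ osc x := by
  set M := univ.sup' univ_nonempty x
  set m := univ.inf' univ_nonempty x
  have hcard : (0 : ℝ) < Fintype.card ι := by exact_mod_cast Fintype.card_pos
  have hM : ∀ j, x j ≤ M := fun j => le_sup' x (mem_univ j)
  have hm : ∀ j, m ≤ x j := fun j => inf'_le x (mem_univ j)
  have havg_le : (Fintype.card ι : ℝ)⁻¹ * ∑ j, x j ≤ M := by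
    rw [inv_mul_le_iff₀ hcard]
    simpa using sum_le_sum fun j (_ : j ∈ univ) => hM j
  have hle_avg : m ≤ (Fintype.card ι : ℝ)⁻¹ * ∑ j, x j := by
    rw [le_inv_mul_iff₀ hcard]
    simpa using sum_le_sum fun j (_ : j ∈ univ) => hm j
  rw [abs_le, osc]
  constructor <;> linarith [hM i, hm i]

-- `A *ᵥ x` is `δ * ∑ x` (a constant) plus averages of `x` with total weight `1 - card ι * δ`.
lemma osc_mulVec_le_mul {A : Matrix ι ι ℝ} {δ : ℝ} (hA : ∀ i j, δ ≤ A i j)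
    (hrow : ∀ i, ∑ j, A i j = 1) (x : ι → ℝ) :
    osc (A *ᵥ x) ≤ (1 - Fintype.card ι * δ) * osc x := by
  set M := univ.sup' univ_nonempty x
  set m := univ.inf' univ_nonempty x
  set γ := 1 - Fintype.card ι * δ
  have hsplit : ∀ i, (A *ᵥ x) i = ∑ k, (A i k - δ) * x k + δ * ∑ k, x k := by
    intro i
    simp only [Matrix.mulVec, dotProduct, sub_mul, sum_sub_distrib, mul_sum]
    ring
  have hweight : ∀ i, ∑ k, (A i k - δ) = γ := by
    simp [sum_sub_distrib, hrow, γ]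
  have hup : univ.sup' univ_nonempty (A *ᵥ x) ≤ γ * M + δ * ∑ k, x k := by
    refine sup'_le _ _ fun i _ => ?_
    rw [hsplit, ← hweight i, sum_mul]
    gcongr with k
    · linarith [hA i k]
    · exact le_sup' x (mem_univ k)
  have hlow : γ * m + δ * ∑ k, x k ≤ univ.inf' univ_nonempty (A *ᵥ x) := by
    refine le_inf' _ _ fun i _ => ?_
    rw [hsplit, ← hweight i, sum_mul]
    gcongr with k
    · linarith [hA i k]
    · exact inf'_le x (mem_univ k)
  rw [osc, osc]
  linarith

lemma osc_mulVec_le [DecidableEq ι] {A : Matrix ι ι ℝ} (hA : A ∈ rowStochastic ℝ ι) (x : ι → ℝ) :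
    osc (A *ᵥ x) ≤ osc x := by
  simpa using osc_mulVec_le_mul (fun i j => nonneg_of_mem_rowStochastic hA (i := i) (j := j))
    (sum_row_of_mem_rowStochastic hA) x

end Oscillation

section Ergodicity

variable {ι : Type*} [Fintype ι] [DecidableEq ι] [Nonempty ι] {F : ℕ → Matrix ι ι ℝ} {a L : ℕ}
  {δ : ℝ}

lemma card_mul_le_one_of_le_apply {A : Matrix ι ι ℝ} (hA : A ∈ rowStochastic ℝ ι)
    (h : ∀ i j, δ ≤ A i j) : Fintype.card ι * δ ≤ 1 := by
  obtain ⟨i⟩ := ‹Nonempty ι›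
  rw [← sum_row_of_mem_rowStochastic hA i]
  simpa using sum_le_sum fun j (_ : j ∈ univ) => h i j

lemma osc_backProd_mulVec_le (hF : ∀ t, F t ∈ rowStochastic ℝ ι)
    (hblock : ∀ m i j, δ ≤ backProd F (a + m * L) (a + (m + 1) * L) i j) (x : ι → ℝ) {T : ℕ}
    (hT : a ≤ T) :
    osc (backProd F a T *ᵥ x) ≤ (1 - Fintype.card ι * δ) ^ ((T - a) / L) * osc x := by
  set γ := 1 - Fintype.card ι * δ
  have hγ : 0 ≤ γ := sub_nonneg.mpr (card_mul_le_one_of_le_apply (backProd_mem F hF) (hblock 0))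
  have hblocks : ∀ m, osc (backProd F a (a + m * L) *ᵥ x) ≤ γ ^ m * osc x := by
    intro m
    induction m with
    | zero => simp
    | succ m ih =>
      rw [← backProd_mul_backProd F (b := a + m * L) (Nat.le_add_right a _) (by gcongr; omega),
        ← mulVec_mulVec, pow_succ', mul_assoc]
      have := osc_mulVec_le_mul (hblock m) (sum_row_of_mem_rowStochastic (backProd_mem F hF))
        (backProd F a (a + m * L) *ᵥ x)
      exact this.trans (mul_le_mul_of_nonneg_left ih hγ)
  have hT' : a + (T - a) / L * L ≤ T := by
    have := Nat.div_mul_le_self (T - a) L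
    omega
  rw [← backProd_mul_backProd F (Nat.le_add_right a _) hT', ← mulVec_mulVec]
  exact (osc_mulVec_le (backProd_mem F hF) _).trans (hblocks _)

theorem tendsto_backProd_mulVec (hF : ∀ t, F t ∈ doublyStochastic ℝ ι) (hδ : 0 < δ) (hL : 0 < L)
    (hblock : ∀ m i j, δ ≤ backProd F (a + m * L) (a + (m + 1) * L) i j) (x : ι → ℝ) :
    Tendsto (fun T => backProd F a T *ᵥ x) atTop
      (𝓝 fun _ => (Fintype.card ι : ℝ)⁻¹ * ∑ j, x j) := by
  have hrow (t : ℕ) : F t ∈ rowStochastic ℝ ι :=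
    (mem_doublyStochastic_iff_mem_rowStochastic_and_mem_colStochastic.mp (hF t)).1
  have hcol (t : ℕ) : F t ∈ colStochastic ℝ ι :=
    (mem_doublyStochastic_iff_mem_rowStochastic_and_mem_colStochastic.mp (hF t)).2
  set γ := 1 - Fintype.card ι * δ
  have hγ0 : 0 ≤ γ :=
    sub_nonneg.mpr (card_mul_le_one_of_le_apply (backProd_mem F hrow) (hblock 0))
  have hγ1 : γ < 1 := by
    have : (0 : ℝ) < Fintype.card ι * δ := mul_pos (by exact_mod_cast Fintype.card_pos) hδ
    linarith
  have hrate : Tendsto (fun T => γ ^ ((T - a) / L) * osc x) atTop (𝓝 0) := by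
    simpa using ((tendsto_pow_atTop_nhds_zero_of_lt_one hγ0 hγ1).comp
      ((Nat.tendsto_div_const_atTop hL.ne').comp (tendsto_sub_atTop_nat a))).mul_const (osc x)
  refine tendsto_pi_nhds.mpr fun i => tendsto_sub_nhds_zero_iff.mp <| squeeze_zero_norm' ?_ hrate
  filter_upwards [eventually_ge_atTop a] with T hT
  rw [Real.norm_eq_abs, ← sum_mulVec_of_mem_colStochastic (backProd_mem F hcol)]
  exact (abs_sub_average_le_osc _ i).trans (osc_backProd_mulVec_le hrow hblock x hT)

theorem tendsto_backProd (hF : ∀ t, F t ∈ doublyStochastic ℝ ι) (hδ : 0 < δ) (hL : 0 < L)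
    (hblock : ∀ m i j, δ ≤ backProd F (a + m * L) (a + (m + 1) * L) i j) {τ : ℕ} (hτ : τ ≤ a) :
    Tendsto (fun T => backProd F τ T) atTop
      (𝓝 ((Fintype.card ι : ℝ)⁻¹ • vecMulVec (fun _ : ι => (1 : ℝ)) (fun _ : ι => (1 : ℝ)))) := by
  refine tendsto_pi_nhds.mpr fun i => tendsto_pi_nhds.mpr fun j => ?_
  set y := backProd F τ a *ᵥ Pi.single j 1
  have hy : ∑ k, y k = 1 := by
    rw [sum_mulVec_of_mem_colStochastic
      (mem_doublyStochastic_iff_mem_rowStochastic_and_mem_colStochastic.mp (backProd_mem F hF)).2]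
    simp
  have := tendsto_pi_nhds.mp (tendsto_backProd_mulVec hF hδ hL hblock y) i
  rw [hy, mul_one] at this
  simp only [Matrix.smul_apply, vecMulVec_apply, mul_one, smul_eq_mul]
  refine this.congr' ?_
  filter_upwards [eventually_ge_atTop a] with T hT
  rw [mulVec_mulVec, backProd_mul_backProd F hτ hT, mulVec_single_one]
  rfl

end Ergodicity

section Metropolis

variable {n : ℕ} (G : SimpleGraph (Fin n)) [DecidableRel G.Adj]

lemma one_div_le_metropolis_weight (i j : Fin n) :
    (1 : ℝ) / n ≤ (1 : ℝ) / (1 + max (G.degree i) (G.degree j) : ℝ) := by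
  have hi := G.degree_lt_card_verts i
  have hj := G.degree_lt_card_verts j
  rw [Fintype.card_fin] at hi hj
  apply one_div_le_one_div_of_le (by positivity)
  exact_mod_cast (show 1 + max (G.degree i) (G.degree j) ≤ n by omega)

lemma metropolis_weight_le (i j : Fin n) :
    (1 : ℝ) / (1 + max (G.degree i) (G.degree j) : ℝ) ≤ 1 / (1 + G.degree i : ℝ) := by
  gcongr
  exact_mod_cast le_max_left _ _

lemma one_div_add_degree_le_metropolis_diag (i : Fin n) :
    (1 : ℝ) / (1 + G.degree i : ℝ) ≤ metropolis G i i := by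
  have hsum : ∑ k ∈ G.neighborFinset i, (1 : ℝ) / (1 + max (G.degree i) (G.degree k) : ℝ)
      ≤ G.degree i / (1 + G.degree i : ℝ) := by
    refine (sum_le_sum fun k _ => metropolis_weight_le G i k).trans_eq ?_
    rw [sum_const, G.card_neighborFinset_eq_degree, nsmul_eq_mul, mul_one_div]
  have hsplit : (1 : ℝ) / (1 + G.degree i : ℝ) = 1 - G.degree i / (1 + G.degree i : ℝ) := by
    field_simp
    ring
  simp only [metropolis, of_apply, if_true]
  linarith

lemma metropolis_apply_of_adj {i j : Fin n} (h : G.Adj i j) :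
    metropolis G i j = (1 : ℝ) / (1 + max (G.degree i) (G.degree j) : ℝ) := by
  simp [metropolis, h.ne, h]

lemma metropolis_apply_of_not_adj {i j : Fin n} (hij : i ≠ j) (h : ¬G.Adj i j) :
    metropolis G i j = 0 := by
  simp [metropolis, hij, h]

lemma metropolis_nonneg (i j : Fin n) : 0 ≤ metropolis G i j := by
  by_cases hij : i = j
  · subst hij
    exact (by positivity : (0 : ℝ) ≤ 1 / (1 + G.degree i : ℝ)).trans
      (one_div_add_degree_le_metropolis_diag G i)
  by_cases h : G.Adj i j
  · rw [metropolis_apply_of_adj G h]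
    positivity
  · rw [metropolis_apply_of_not_adj G hij h]

lemma metropolis_symm (i j : Fin n) : metropolis G i j = metropolis G j i := by
  by_cases hij : i = j
  · rw [hij]
  by_cases h : G.Adj i j
  · rw [metropolis_apply_of_adj G h, metropolis_apply_of_adj G h.symm, max_comm]
  · rw [metropolis_apply_of_not_adj G hij h,
      metropolis_apply_of_not_adj G (Ne.symm hij) (fun h' => h h'.symm)]

lemma sum_metropolis_row (i : Fin n) : ∑ j, metropolis G i j = 1 := by
  rw [← sum_subset (subset_univ (insert i (G.neighborFinset i)))]
  · rw [sum_insert (by simp), sum_congr rfl fun j hj =>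
      metropolis_apply_of_adj G ((G.mem_neighborFinset i j).mp hj)]
    simp [metropolis]
  · intro j _ hj
    simp only [mem_insert, SimpleGraph.mem_neighborFinset, not_or] at hj
    exact metropolis_apply_of_not_adj G (Ne.symm hj.1) hj.2

lemma metropolis_mem_doublyStochastic : metropolis G ∈ doublyStochastic ℝ (Fin n) :=
  mem_doublyStochastic_iff_sum.mpr ⟨metropolis_nonneg G, sum_metropolis_row G, fun j => by
    simpa only [metropolis_symm G _ j] using sum_metropolis_row G j⟩

lemma one_div_le_metropolis_diag (i : Fin n) : (1 : ℝ) / n ≤ metropolis G i i :=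
  (one_div_le_metropolis_weight G i i).trans <| by
    simpa using one_div_add_degree_le_metropolis_diag G i

lemma one_div_le_metropolis_of_adj {i j : Fin n} (h : G.Adj i j) :
    (1 : ℝ) / n ≤ metropolis G i j :=
  (metropolis_apply_of_adj G h).symm ▸ one_div_le_metropolis_weight G i j

end Metropolis

section Windows

variable {n B : ℕ} (E : ℕ → SimpleGraph (Fin n))

lemma windowGraph_adj {k : ℕ} {i j : Fin n} :
    (windowGraph E B k).Adj i j ↔ ∃ t ∈ Ico (k * B) ((k + 1) * B), (E t).Adj i j := by
  simp [windowGraph]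

variable [∀ t, DecidableRel (E t).Adj]

-- `n` windows rather than the `n - 1` that suffice, so that the block length `n * B` is
-- positive also for `n = 1`.
lemma metropolis_block_apply_ge (hconn : ∀ k, (windowGraph E B k).Connected) (k : ℕ)
    (i j : Fin n) :
    (((1 : ℝ) / n) ^ B) ^ n ≤ backProd (fun t => metropolis (E t)) (k * B) ((k + n) * B) i j := by
  have hc : (0 : ℝ) ≤ 1 / n := by positivity
  have hW (t : ℕ) := metropolis_nonneg (E t)
  have hdiag (t : ℕ) := one_div_le_metropolis_diag (E t)
  have hlen (k : ℕ) : (k + 1) * B - k * B = B := by rw [add_one_mul, add_tsub_cancel_left]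
  have hwin (k : ℕ) : k * B ≤ (k + 1) * B := Nat.mul_le_mul_right B k.le_succ
  rw [← backProd_windows _ B (Nat.le_add_right k n)]
  refine pow_le_backProd_apply_of_connected (by positivity) (fun k => backProd_nonneg hW (hwin k))
    (fun k i => ?_) (fun k i j h => ?_) hconn k (m := n) (by simp) i j
  · simpa [hlen] using pow_le_backProd_diag hc hW hdiag (hwin k) i
  · obtain ⟨t, ht, hadj⟩ := (windowGraph_adj E).mp h
    rw [mem_Ico] at ht
    simpa [hlen] using
      pow_le_backProd_apply hc hW hdiag ht.1 ht.2 (one_div_le_metropolis_of_adj (E t) hadj)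

end Windows

/-- For a uniformly `B`-connected time-varying graph on
`V = {1,…,n}` with Metropolis weight matrices `W t`, the backward products
`W T * W (T-1) * ⋯ * W τ` converge, as `T → ∞`, to the uniform averaging
matrix `(1/n) 𝟙 𝟙ᵀ`, for every starting time `τ`. -/
theorem metropolis_backProd_tendsto_uniform (n B : ℕ) (hn : 0 < n) (hB : 0 < B)
    (E : ℕ → SimpleGraph (Fin n)) [∀ t, DecidableRel (E t).Adj]
    (hconn : ∀ k : ℕ, (windowGraph E B k).Connected) (τ : ℕ) :
    Filter.Tendsto
      (fun T : ℕ =>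
        ((List.range (T + 1 - τ)).map fun s => metropolis (E (T - s))).prod)
      Filter.atTop
      (nhds ((n : ℝ)⁻¹ • vecMulVec (fun _ : Fin n => (1 : ℝ))
        (fun _ : Fin n => (1 : ℝ)))) := by
  have : Nonempty (Fin n) := ⟨⟨0, hn⟩⟩
  have hprod (T : ℕ) : ((List.range (T + 1 - τ)).map fun s => metropolis (E (T - s))).prod
      = backProd (fun t => metropolis (E t)) τ (T + 1) := by
    simp [backProd]
  have hblock (m : ℕ) (i j : Fin n) : (((1 : ℝ) / n) ^ B) ^ n ≤ backProd (fun t => metropolis (E t))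
      (τ * B + m * (n * B)) (τ * B + (m + 1) * (n * B)) i j := by
    convert metropolis_block_apply_ge E hconn (τ + m * n) i j using 2 <;> ring
  have hlim := tendsto_backProd (fun t => metropolis_mem_doublyStochastic (E t)) (by positivity)
    (Nat.mul_pos hn hB) hblock (Nat.le_mul_of_pos_right τ hB)
  simp only [hprod]
  simpa only [Fintype.card_fin, Function.comp_def] using hlim.comp (tendsto_add_atTop_nat 1)
end
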